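/- arXiv:cs/0602024 — 3 statements merged into one kernel-verified Lean document; each statement's English description precedes it below -/
import Mathlib

section
/- (Esakia's Lemma for ◇) Let F = (W, R, 𝕎) be a descriptive general frame, with topology T(F) generated by taking 𝕎 as a base of clopen sets. Then for any downward directed family {C_i : i ∈ I} of nonempty closed sets, ◇(⋂_{i∈I} C_i) = ⋂_{i∈I} ◇C_i, where ◇A = {w : ∃v (Rwv ∧ v ∈ A)}. -/
/-!
For `x ∈ ⋂ ◇Cᵢ`, the sets `R(x) ∩ Cᵢ` form a downward directed family of nonempty sets, so by
compactness some point `v` lies in every admissible superset of each of them. Tightness makes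
`R(x)` closed, and a closed set is the intersection of its admissible supersets, so
`v ∈ R(x) ∩ Cᵢ` for all `i`; that is, `x ∈ ◇(⋂ Cᵢ)`.
-/

/-- The diamond set operator: `◇A = {w : ∃v, R w v ∧ v ∈ A}`. -/
def diaOp {W : Type} (R : W → W → Prop) (A : Set W) : Set W := {w | ∃ v, R w v ∧ v ∈ A}

/-- The box set operator: `□A = {w : ∀v, R w v → v ∈ A}`. -/
def boxOp {W : Type} (R : W → W → Prop) (A : Set W) : Set W := {w | ∀ v, R w v → v ∈ A}

/-- The inverse diamond set operator: `◇⁻¹A = {w : ∃v ∈ A, R v w} = R(A)`. -/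
def idiaOp {W : Type} (R : W → W → Prop) (A : Set W) : Set W := {w | ∃ v, R v w ∧ v ∈ A}

/-- The inverse box set operator: `□⁻¹A = {w : ∀v, R v w → v ∈ A}`. -/
def iboxOp {W : Type} (R : W → W → Prop) (A : Set W) : Set W := {w | ∀ v, R v w → v ∈ A}
/-- A general frame: a Kripke frame together with a Boolean algebra of
admissible subsets closed under the diamond operator. -/
structure GenFrame (W : Type) where
  R : W → W → Prop
  adm : Set (Set W)
  univ_mem : Set.univ ∈ adm
  compl_mem : ∀ X ∈ adm, Xᶜ ∈ adm
  inter_mem : ∀ X ∈ adm, ∀ Y ∈ adm, X ∩ Y ∈ adm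
  dia_mem : ∀ X ∈ adm, diaOp R X ∈ adm

/-- The topology generated by the admissible sets as a base of clopen sets. -/
def GenFrame.top {W : Type} (F : GenFrame W) : TopologicalSpace W :=
  TopologicalSpace.generateFrom F.adm

/-- Differentiated: distinct points are separated by admissible sets. -/
def GenFrame.differentiated {W : Type} (F : GenFrame W) : Prop :=
  ∀ x y : W, x ≠ y → ∃ X ∈ F.adm, x ∈ X ∧ y ∉ X

/-- Tight: `R x y` iff `x ∈ ◇Y` for every admissible `Y` containing `y`. -/
def GenFrame.tight {W : Type} (F : GenFrame W) : Prop :=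
  ∀ x y : W, F.R x y ↔ ∀ Y ∈ F.adm, y ∈ Y → x ∈ diaOp F.R Y

/-- Compact: every family of admissible sets with the finite intersection
property has nonempty intersection. -/
def GenFrame.cpt {W : Type} (F : GenFrame W) : Prop :=
  ∀ C : Set (Set W), C ⊆ F.adm →
    (∀ D : Set (Set W), D ⊆ C → D.Finite → (⋂₀ D).Nonempty) →
    (⋂₀ C).Nonempty

/-- A descriptive frame is a differentiated, tight and compact general frame. -/
def GenFrame.descriptive {W : Type} (F : GenFrame W) : Prop :=
  F.differentiated ∧ F.tight ∧ F.cpt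

lemma diaOp_mono {W : Type} (R : W → W → Prop) {A B : Set W} (h : A ⊆ B) :
    diaOp R A ⊆ diaOp R B :=
  fun _ ⟨v, hR, hv⟩ => ⟨v, hR, h hv⟩

namespace GenFrame

variable {W : Type} (F : GenFrame W)

lemma isTopologicalBasis_adm : @TopologicalSpace.IsTopologicalBasis W F.top F.adm := by
  let := F.top
  refine ⟨fun t₁ h₁ t₂ h₂ x hx => ⟨t₁ ∩ t₂, F.inter_mem _ h₁ _ h₂, hx, subset_rfl⟩, ?_, rfl⟩
  exact Set.eq_univ_of_univ_subset fun x _ => ⟨Set.univ, F.univ_mem, trivial⟩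

lemma mem_of_isClosed_of_forall_adm_superset {S : Set W} (hS : @IsClosed W F.top S) {v : W}
    (hv : ∀ Z ∈ F.adm, S ⊆ Z → v ∈ Z) : v ∈ S := by
  let := F.top
  by_contra hvS
  obtain ⟨Y, hY, hvY, hYS⟩ :=
    F.isTopologicalBasis_adm.exists_subset_of_mem_open hvS hS.isOpen_compl
  exact hv Yᶜ (F.compl_mem Y hY) (fun w hwS hwY => hYS hwY hwS) hvY

lemma isClosed_setOf_R (htight : F.tight) (x : W) : @IsClosed W F.top {y | F.R x y} := by
  let := F.top
  refine isOpen_compl_iff.mp (isOpen_iff_forall_mem_open.mpr fun y hy => ?_)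
  obtain ⟨Y, hY, hyY, hxY⟩ : ∃ Y ∈ F.adm, y ∈ Y ∧ x ∉ diaOp F.R Y := by
    simpa [htight x y] using hy
  exact ⟨Y, fun z hzY hxz => hxY ⟨z, hxz, hzY⟩,
    TopologicalSpace.isOpen_generateFrom_of_mem hY, hyY⟩

lemma exists_mem_adm_supersets_of_directed (hcpt : F.cpt) {I : Type} [Nonempty I]
    (S : I → Set W) (hdir : Directed (· ⊇ ·) S) (hne : ∀ i, (S i).Nonempty) :
    ∃ v, ∀ i, ∀ Z ∈ F.adm, S i ⊆ Z → v ∈ Z := by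
  classical
  obtain ⟨v, hv⟩ := hcpt {Z | Z ∈ F.adm ∧ ∃ i, S i ⊆ Z} (fun Z hZ => hZ.1) (by
    intro D hD hDfin
    choose! idx hidx using fun Z (hZ : Z ∈ D) => (hD hZ).2
    obtain ⟨k, hk⟩ := hdir.finset_le (hDfin.toFinset.image idx)
    obtain ⟨v, hv⟩ := hne k
    exact ⟨v, fun Z hZ =>
      hidx Z hZ (hk (idx Z) (Finset.mem_image_of_mem idx (hDfin.mem_toFinset.mpr hZ)) hv)⟩)
  exact ⟨v, fun i Z hZ hSZ => hv Z ⟨hZ, i, hSZ⟩⟩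

end GenFrame

theorem esakia_dia_general {W : Type} (F : GenFrame W) (hF : F.descriptive)
    {I : Type} [Nonempty I] (C : I → Set W)
    (hclosed : ∀ i, @IsClosed W F.top (C i))
    (hdir : ∀ i j, ∃ k, C k ⊆ C i ∩ C j) :
    diaOp F.R (⋂ i, C i) = ⋂ i, diaOp F.R (C i) := by
  obtain ⟨-, htight, hcpt⟩ := hF
  let := F.top
  refine subset_antisymm (Set.subset_iInter fun i => diaOp_mono F.R (Set.iInter_subset C i)) ?_
  intro x hx
  let S i := {y | F.R x y} ∩ C i
  have hS_dir : Directed (· ⊇ ·) S := fun i j => (hdir i j).imp fun k hk =>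
    ⟨Set.inter_subset_inter_right _ (hk.trans Set.inter_subset_left),
      Set.inter_subset_inter_right _ (hk.trans Set.inter_subset_right)⟩
  have hS_ne i : (S i).Nonempty := Set.mem_iInter.mp hx i
  obtain ⟨v, hv⟩ := F.exists_mem_adm_supersets_of_directed hcpt S hS_dir hS_ne
  have hvS i : v ∈ S i := F.mem_of_isClosed_of_forall_adm_superset
    ((F.isClosed_setOf_R htight x).inter (hclosed i)) (hv i)
  exact ⟨v, (hvS (Classical.arbitrary I)).1, Set.mem_iInter.mpr fun i => (hvS i).2⟩

/-- Esakia's Lemma for `◇`: in a descriptive frame, `◇` commutes with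
intersections of downward directed families of nonempty closed sets. -/
theorem esakia_dia {W : Type} (F : GenFrame W) (hF : F.descriptive)
    {I : Type} [Nonempty I] (C : I → Set W)
    (hclosed : ∀ i, @IsClosed W F.top (C i))
    (hne : ∀ i, (C i).Nonempty)
    (hdir : ∀ i j, ∃ k, C k ⊆ C i ∩ C j) :
    diaOp F.R (⋂ i, C i) = ⋂ i, diaOp F.R (C i) :=
  esakia_dia_general F hF C hclosed hdir
end

section
/- (Esakia's Lemma for ◇⁻¹) Let F = (W, R, 𝕎) be a descriptive general frame. Then for any downwards directed family {C_i : i ∈ I} of nonempty closed sets in the topology generated by 𝕎, ◇⁻¹(⋂_{i∈I} C_i) = ⋂_{i∈I} ◇⁻¹C_i, where ◇⁻¹A = {w : ∃v (Rvw ∧ v ∈ A)} = R(A), the set of R-successors of points in A. -/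
/-! The admissible sets are clopen and, by tightness, `{v | R v w} = ⋂ {◇Y | Y ∈ 𝕎, w ∈ Y}`
is closed; compactness of the frame makes its topology compact (Alexander's subbasis
theorem). A point `w` of `⋂ i, ◇⁻¹ C i` then has predecessors in every `C i`, so the sets
`C i ∩ {v | R v w}` form a directed family of nonempty closed sets in a compact space, whose
intersection is nonempty. -/

open Set TopologicalSpace Topology

theorem idiaOp_iInter_of_isClosed_of_directed {W : Type} [TopologicalSpace W] [CompactSpace W]
    {R : W → W → Prop} (hR : ∀ w, IsClosed {v | R v w}) {I : Type} [Nonempty I]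
    {C : I → Set W} (hclosed : ∀ i, IsClosed (C i)) (hdir : Directed (· ⊇ ·) C) :
    idiaOp R (⋂ i, C i) = ⋂ i, idiaOp R (C i) := by
  refine Subset.antisymm (fun w ⟨v, hvw, hv⟩ ↦ mem_iInter.2 fun i ↦ ⟨v, hvw, mem_iInter.1 hv i⟩)
    fun w hw ↦ ?_
  have hpred : ∀ i, (C i ∩ {v | R v w}).Nonempty := fun i ↦
    let ⟨v, hvw, hv⟩ := mem_iInter.1 hw i
    ⟨v, hv, hvw⟩
  obtain ⟨v, hv⟩ := IsCompact.nonempty_iInter_of_directed_nonempty_isCompact_isClosed _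
    (hdir.mono_comp _ fun _ _ h ↦ inter_subset_inter_left _ h) hpred
    (fun i ↦ ((hclosed i).inter (hR w)).isCompact) fun i ↦ (hclosed i).inter (hR w)
  exact ⟨v, (mem_iInter.1 hv (Classical.arbitrary I)).2, mem_iInter.2 fun i ↦ (mem_iInter.1 hv i).1⟩

namespace GenFrame

variable {W : Type} (F : GenFrame W)

theorem isClosed_of_mem_adm {X : Set W} (hX : X ∈ F.adm) : IsClosed[F.top] X :=
  @isOpen_compl_iff W X F.top |>.1 (isOpen_generateFrom_of_mem (F.compl_mem X hX))

theorem compactSpace_of_cpt (hF : F.cpt) : @CompactSpace W F.top := by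
  let _ : TopologicalSpace W := F.top
  refine ⟨isCompact_generateFrom rfl fun P hP hcover ↦ ?_⟩
  by_contra! hfin
  have hFIP : ∀ D ⊆ compl '' P, D.Finite → (⋂₀ D).Nonempty := by
    intro D hD hDfin
    have hQ : compl '' D ⊆ P := by
      rintro _ ⟨_, hXD, rfl⟩
      obtain ⟨Y, hY, rfl⟩ := hD hXD
      rwa [compl_compl]
    obtain ⟨x, -, hx⟩ := not_subset.1 (hfin _ hQ (hDfin.image _))
    refine ⟨x, fun X hX ↦ ?_⟩
    by_contra hxX
    exact hx ⟨Xᶜ, mem_image_of_mem _ hX, hxX⟩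
  obtain ⟨x, hx⟩ := hF _ (image_subset_iff.2 fun X hX ↦ F.compl_mem X (hP hX)) hFIP
  obtain ⟨X, hXP, hxX⟩ := mem_sUnion.1 (hcover (mem_univ x))
  exact hx Xᶜ (mem_image_of_mem _ hXP) hxX

theorem isClosed_setOf_rel_of_tight (hF : F.tight) (w : W) : IsClosed[F.top] {v | F.R v w} := by
  have hpred : {v | F.R v w} = ⋂ Y ∈ {Y ∈ F.adm | w ∈ Y}, diaOp F.R Y := by
    ext v
    simp only [mem_ofPred_eq, mem_iInter, hF v w, and_imp]
  rw [hpred]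
  exact @isClosed_biInter _ _ F.top _ _ fun Y hY ↦ F.isClosed_of_mem_adm (F.dia_mem Y hY.1)

end GenFrame

theorem esakia_idia_general {W : Type} (F : GenFrame W) (hF : F.descriptive)
    {I : Type} [Nonempty I] (C : I → Set W)
    (hclosed : ∀ i, @IsClosed W F.top (C i))
    (hdir : ∀ i j, ∃ k, C k ⊆ C i ∩ C j) :
    idiaOp F.R (⋂ i, C i) = ⋂ i, idiaOp F.R (C i) := by
  obtain ⟨-, htight, hcpt⟩ := hF
  let _ : TopologicalSpace W := F.top
  have := F.compactSpace_of_cpt hcpt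
  refine idiaOp_iInter_of_isClosed_of_directed (F.isClosed_setOf_rel_of_tight htight) hclosed
    fun i j ↦ ?_
  obtain ⟨k, hk⟩ := hdir i j
  exact ⟨k, hk.trans inter_subset_left, hk.trans inter_subset_right⟩

/-- Esakia's Lemma for `◇⁻¹`: in a descriptive frame, `◇⁻¹` commutes with
intersections of downwards directed families of nonempty closed sets. -/
theorem esakia_idia {W : Type} (F : GenFrame W) (hF : F.descriptive)
    {I : Type} [Nonempty I] (C : I → Set W)
    (hclosed : ∀ i, @IsClosed W F.top (C i))
    (hne : ∀ i, (C i).Nonempty)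
    (hdir : ∀ i j, ∃ k, C k ⊆ C i ∩ C j) :
    idiaOp F.R (⋂ i, C i) = ⋂ i, idiaOp F.R (C i) :=
  esakia_idia_general F hF C hclosed hdir
end

section
/- (Correctness of the ◇-rule) Let M = (W, R, V) be a Kripke model, j a nominal with V(j) = {u}, γ an ML⁺-formula, and k a nominal not occurring in γ and distinct from j. Then j → ◇γ is globally true in M if and only if there exists a valuation V' differing from V only on k, with V'(k) a singleton, such that both j → ◇k and k → γ are globally true in (W, R, V'). -/
/-- Formulas of the extended modal language ML⁺, with nominals and the
inverse modalities `◇⁻¹` (`idia`) and `□⁻¹` (`ibox`). -/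
inductive MFp : Type where
  | bot
  | top
  | var (p : Nat)
  | nom (k : Nat)
  | neg (φ : MFp)
  | or (φ ψ : MFp)
  | and (φ ψ : MFp)
  | dia (φ : MFp)
  | box (φ : MFp)
  | idia (φ : MFp)
  | ibox (φ : MFp)

def MFp.imp (φ ψ : MFp) : MFp := MFp.or (MFp.neg φ) ψ

/-- Satisfaction for ML⁺: `V` interprets propositional variables,
`g` assigns a world (i.e. a singleton) to each nominal. -/
def satp {W : Type} (R : W → W → Prop) (V : Nat → Set W) (g : Nat → W) : MFp → W → Prop
  | .bot, _ => False
  | .top, _ => True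
  | .var p, w => w ∈ V p
  | .nom k, w => w = g k
  | .neg φ, w => ¬ satp R V g φ w
  | .or φ ψ, w => satp R V g φ w ∨ satp R V g ψ w
  | .and φ ψ, w => satp R V g φ w ∧ satp R V g ψ w
  | .dia φ, w => ∃ v, R w v ∧ satp R V g φ v
  | .box φ, w => ∀ v, R w v → satp R V g φ v
  | .idia φ, w => ∃ v, R v w ∧ satp R V g φ v
  | .ibox φ, w => ∀ v, R v w → satp R V g φ v

/-- The nominal `k` occurs in the formula. -/
def nomOccurs (k : Nat) : MFp → Prop
  | .bot => False
  | .top => False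
  | .var _ => False
  | .nom n => n = k
  | .neg φ => nomOccurs k φ
  | .or φ ψ => nomOccurs k φ ∨ nomOccurs k ψ
  | .and φ ψ => nomOccurs k φ ∨ nomOccurs k ψ
  | .dia φ => nomOccurs k φ
  | .box φ => nomOccurs k φ
  | .idia φ => nomOccurs k φ
  | .ibox φ => nomOccurs k φ


lemma satp_agree {W : Type} (R : W → W → Prop) (V : Nat → Set W)
    (g g' : Nat → W) (k : Nat) (h : ∀ n, n ≠ k → g' n = g n) :
    ∀ (φ : MFp), ¬ nomOccurs k φ → ∀ w, (satp R V g' φ w ↔ satp R V g φ w) := by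
  intro φ
  induction φ with
  | bot => intro _ w; rfl
  | top => intro _ w; rfl
  | var p => intro _ w; rfl
  | nom n => intro hn w; simp [satp, h n hn]
  | neg φ ih => intro hn w; simp [satp, ih hn w]
  | or φ ψ ih1 ih2 =>
      intro hn w
      simp [satp, ih1 (fun h2 => hn (Or.inl h2)) w, ih2 (fun h2 => hn (Or.inr h2)) w]
  | and φ ψ ih1 ih2 =>
      intro hn w
      simp [satp, ih1 (fun h2 => hn (Or.inl h2)) w, ih2 (fun h2 => hn (Or.inr h2)) w]
  | dia φ ih => intro hn w; simp only [satp]; exact exists_congr fun v => and_congr_right fun _ => ih hn v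
  | box φ ih => intro hn w; simp only [satp]; exact forall_congr' fun v => imp_congr_right fun _ => ih hn v
  | idia φ ih => intro hn w; simp only [satp]; exact exists_congr fun v => and_congr_right fun _ => ih hn v
  | ibox φ ih => intro hn w; simp only [satp]; exact forall_congr' fun v => imp_congr_right fun _ => ih hn v

/-- Correctness of the `◇`-rule: `j → ◇γ` is globally true iff, for some
reassignment of the fresh nominal `k` (all other nominals unchanged), both
`j → ◇k` and `k → γ` are globally true. -/
theorem dia_rule_correct {W : Type} (R : W → W → Prop) (V : Nat → Set W)
    (g : Nat → W) (j k : Nat) (γ : MFp) (hjk : k ≠ j) (hk : ¬ nomOccurs k γ) :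
    (∀ w : W, satp R V g (MFp.imp (MFp.nom j) (MFp.dia γ)) w) ↔
      ∃ g' : Nat → W, (∀ n, n ≠ k → g' n = g n) ∧
        (∀ w : W, satp R V g' (MFp.imp (MFp.nom j) (MFp.dia (MFp.nom k))) w) ∧
        (∀ w : W, satp R V g' (MFp.imp (MFp.nom k) γ) w) := by
  constructor
  · intro H
    have H' := H (g j)
    simp only [MFp.imp, satp, not_true, false_or] at H'
    obtain ⟨v, hRv, hv⟩ := H'
    refine ⟨Function.update g k v, fun n hn => Function.update_of_ne hn _ _, ?_, ?_⟩
    · intro w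
      by_cases hw : w = g j
      · right
        exact ⟨v, hw ▸ hRv, by simp [satp, Function.update_self]⟩
      · left
        simpa [satp, MFp.imp, Function.update_of_ne hjk.symm] using hw
    · intro w
      by_cases hw : w = v
      · right
        rw [satp_agree R V g (Function.update g k v) k (fun n hn => Function.update_of_ne hn _ _) γ hk w]
        exact hw ▸ hv
      · left
        simpa [satp, MFp.imp, Function.update_self] using hw
  · rintro ⟨g', hg', h1, h2⟩ w
    by_cases hw : w = g j
    · right
      have H1 := h1 w
      simp only [MFp.imp, satp] at H1
      rcases H1 with h | h
      · exact absurd (by rw [hw, hg' j hjk.symm] : w = g' j) h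
      · obtain ⟨v, hRv, hv⟩ := h
        refine ⟨v, hRv, ?_⟩
        have H2 := h2 v
        simp only [MFp.imp, satp] at H2
        rcases H2 with h | h
        · exact absurd hv h
        · exact (satp_agree R V g g' k hg' γ hk v).mp h
    · left
      simpa [satp, MFp.imp] using hw
end
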